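/- arXiv:2402.06338 — 2 statements merged into one kernel-verified Lean document; each statement's English description precedes it below -/
import Mathlib

section
/- Every fragile finite simple graph G with girth at least 4 (i.e., containing no cycle of length 3) on at least 3 vertices satisfies |E(G)| ≤ 2·|V(G)| − 4. -/
/-- A graph is `k`-connected if it has at least `k+1` vertices and deleting any set of
at most `k-1` vertices leaves a connected (in particular nonempty) graph. -/
def SimpleGraph.IsKConnected {V : Type*} (G : SimpleGraph V) (k : ℕ) : Prop :=
  k + 1 ≤ Nat.card V ∧ ∀ S : Set V, S.ncard ≤ k - 1 → (G.induce Sᶜ).Connected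

/-- A graph is fragile if it has no 3-connected subgraph. -/
def SimpleGraph.Fragile {V : Type*} (G : SimpleGraph V) : Prop :=
  ∀ H : G.Subgraph, ¬ H.coe.IsKConnected 3

/-- A graph is `m`-fragile if every 3-connected subgraph of it is `(m-1)`-colourable. -/
def SimpleGraph.MFragile {V : Type*} (m : ℕ) (G : SimpleGraph V) : Prop :=
  ∀ H : G.Subgraph, H.coe.IsKConnected 3 → H.coe.Colorable (m - 1)

/-
Induct on vertex sets `U` of size at least 3, proving `e(U) + 4 ≤ 2|U|`. Three vertices span at
most two edges since `G` is triangle-free, and a vertex of degree at most 2 in `G[U]` can be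
deleted. Otherwise `G[U]` has minimum degree at least 3 and, being a subgraph of a fragile graph,
has a separator `S` with at most two vertices splitting `U \ S` into sides `A` and `B` without
edges between them. The minimum degree forces `A ∪ S` and `B ∪ S` to have at least four vertices
each, so induction applies to both, and
`e(U) ≤ e(A ∪ S) + e(B ∪ S) ≤ 2(|U| + |S|) - 8 ≤ 2|U| - 4`.
-/

open Finset

namespace SimpleGraph
variable {V : Type*} [DecidableEq V] {G : SimpleGraph V}

section edgesIn
variable (G) [Fintype G.edgeSet]

def edgesIn (U : Finset V) : Finset (Sym2 V) := G.edgeFinset ∩ U.sym2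

variable {G}

@[simp]
lemma mem_edgesIn {U : Finset V} {e : Sym2 V} :
    e ∈ G.edgesIn U ↔ e ∈ G.edgeSet ∧ ∀ v ∈ e, v ∈ U := by
  simp [edgesIn, Finset.mem_sym2_iff]

lemma edgesIn_univ [Fintype V] : G.edgesIn univ = G.edgeFinset := by
  ext e; simp

lemma card_edgesIn_le_add {U U₁ U₂ : Finset V}
    (h : ∀ a ∈ U, ∀ b ∈ U, G.Adj a b → (a ∈ U₁ ∧ b ∈ U₁) ∨ (a ∈ U₂ ∧ b ∈ U₂)) :
    #(G.edgesIn U) ≤ #(G.edgesIn U₁) + #(G.edgesIn U₂) := by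
  refine (card_le_card fun e he => ?_).trans (card_union_le _ _)
  induction e using Sym2.ind with
  | h a b =>
    simp only [mem_edgesIn, mem_edgeSet, Sym2.mem_iff, forall_eq_or_imp, forall_eq,
      mem_union] at he ⊢
    have := h a he.2.1 b he.2.2 he.1
    tauto

lemma card_edgesIn_le_card_edgesIn_erase_add [DecidableRel G.Adj] (U : Finset V) (x : V) :
    #(G.edgesIn U) ≤ #(G.edgesIn (U.erase x)) + #{y ∈ U | G.Adj x y} := by
  have : G.edgesIn U ⊆ G.edgesIn (U.erase x) ∪ {y ∈ U | G.Adj x y}.image (s(x, ·)) := by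
    intro e he
    induction e using Sym2.ind with
    | h a b =>
      simp only [mem_edgesIn, mem_edgeSet, Sym2.mem_iff, forall_eq_or_imp, forall_eq] at he
      simp only [mem_union, mem_edgesIn, mem_edgeSet, Sym2.mem_iff, forall_eq_or_imp, forall_eq,
        mem_erase, mem_image, mem_filter, Sym2.eq, Sym2.rel_iff']
      by_cases ha : a = x
      · subst ha
        exact Or.inr ⟨b, ⟨he.2.2, he.1⟩, by simp⟩
      by_cases hb : b = x
      · subst hb
        exact Or.inr ⟨a, ⟨he.2.1, he.1.symm⟩, by simp⟩
      · exact Or.inl ⟨he.1, ⟨ha, he.2.1⟩, hb, he.2.2⟩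
  exact (card_le_card this).trans <|
    (card_union_le _ _).trans (Nat.add_le_add_left card_image_le _)

lemma card_edgesIn_le_two_of_card_eq_three (htf : G.CliqueFree 3) {U : Finset V} (hU : #U = 3) :
    #(G.edgesIn U) ≤ 2 := by
  obtain ⟨a, b, c, hab, hac, hbc, rfl⟩ := card_eq_three.1 hU
  have hsub : G.edgesIn {a, b, c} ⊆ {s(a, b), s(a, c), s(b, c)} := by
    intro e he
    induction e using Sym2.ind with
    | h u v =>
      simp only [mem_edgesIn, mem_edgeSet, Sym2.mem_iff, forall_eq_or_imp, forall_eq,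
        mem_insert, mem_singleton] at he
      obtain ⟨huv, hu, hv⟩ := he
      rcases hu with rfl | rfl | rfl <;> rcases hv with rfl | rfl | rfl <;>
        simp_all [Sym2.eq_swap]
  refine Nat.le_of_lt_succ (lt_of_le_of_ne ((card_le_card hsub).trans card_le_three) fun h3 => ?_)
  have heq := eq_of_subset_of_card_le hsub (h3 ▸ card_le_three)
  have hmem : ∀ e ∈ ({s(a, b), s(a, c), s(b, c)} : Finset (Sym2 V)), e ∈ G.edgeSet :=
    fun e he => (mem_edgesIn.1 (heq ▸ he)).1
  simp only [mem_insert, mem_singleton, forall_eq_or_imp, forall_eq, mem_edgeSet] at hmem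
  exact htf _ (is3Clique_triple_iff.2 hmem)

end edgesIn

variable (G) in
structure IsSeparation (U S A B : Finset V) : Prop where
  subset : S ⊆ U
  sdiff_eq : U \ S = A ∪ B
  disjoint : Disjoint A B
  left_nonempty : A.Nonempty
  right_nonempty : B.Nonempty
  not_adj : ∀ a ∈ A, ∀ b ∈ B, ¬ G.Adj a b

namespace IsSeparation
variable {U S A B : Finset V}

lemma symm (h : G.IsSeparation U S A B) : G.IsSeparation U S B A :=
  ⟨h.subset, union_comm A B ▸ h.sdiff_eq, h.disjoint.symm, h.right_nonempty, h.left_nonempty,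
    fun b hb a ha hba => h.not_adj a ha b hb hba.symm⟩

lemma mem_or_mem_or_mem (h : G.IsSeparation U S A B) {v : V} (hv : v ∈ U) :
    v ∈ A ∨ v ∈ B ∨ v ∈ S := by
  by_cases hvS : v ∈ S
  · exact Or.inr (Or.inr hvS)
  · simpa only [mem_union, or_assoc] using
      Or.inl (h.sdiff_eq ▸ mem_sdiff.2 ⟨hv, hvS⟩ : v ∈ A ∪ B)

lemma mem_left_union_or_mem_right_union (h : G.IsSeparation U S A B) {a b : V} (ha : a ∈ U)
    (hb : b ∈ U) (hab : G.Adj a b) : (a ∈ A ∪ S ∧ b ∈ A ∪ S) ∨ (a ∈ B ∪ S ∧ b ∈ B ∪ S) := by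
  have := h.not_adj a
  have := h.not_adj b
  simp only [mem_union]
  rcases h.mem_or_mem_or_mem ha with h1 | h1 | h1 <;>
    rcases h.mem_or_mem_or_mem hb with h2 | h2 | h2 <;> tauto

lemma card_edgesIn_le [Fintype G.edgeSet] (h : G.IsSeparation U S A B) :
    #(G.edgesIn U) ≤ #(G.edgesIn (A ∪ S)) + #(G.edgesIn (B ∪ S)) :=
  card_edgesIn_le_add fun _ ha _ hb hab => h.mem_left_union_or_mem_right_union ha hb hab

lemma card_add_card (h : G.IsSeparation U S A B) : #(A ∪ S) + #(B ∪ S) = #U + #S := by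
  rw [← card_union_add_card_inter, ← union_union_distrib_right, ← inter_union_distrib_right,
    disjoint_iff_inter_eq_empty.1 h.disjoint, empty_union, ← h.sdiff_eq,
    sdiff_union_of_subset h.subset]

lemma left_subset (h : G.IsSeparation U S A B) : A ⊆ U :=
  fun _ ha => (mem_sdiff.1 (h.sdiff_eq ▸ mem_union_left B ha)).1

lemma left_union_ssubset (h : G.IsSeparation U S A B) : A ∪ S ⊂ U := by
  obtain ⟨b, hb⟩ := h.right_nonempty
  have hbU : b ∈ U \ S := h.sdiff_eq ▸ mem_union_right A hb
  refine (ssubset_iff_of_subset (union_subset h.left_subset h.subset)).2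
    ⟨b, (mem_sdiff.1 hbU).1, ?_⟩
  rw [mem_union, not_or]
  exact ⟨Finset.disjoint_right.1 h.disjoint hb, (mem_sdiff.1 hbU).2⟩

lemma card_filter_adj_lt [DecidableRel G.Adj] (h : G.IsSeparation U S A B) {a : V}
    (ha : a ∈ A) : #{v ∈ U | G.Adj a v} < #(A ∪ S) := by
  refine card_lt_card ⟨fun v hv => ?_, fun hsub => ?_⟩
  · obtain ⟨hvU, hav⟩ := mem_filter.1 hv
    rcases h.mem_or_mem_or_mem hvU with hvA | hvB | hvS
    · exact mem_union_left S hvA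
    · exact absurd hav (h.not_adj a ha v hvB)
    · exact mem_union_right A hvS
  · exact G.irrefl (mem_filter.1 (hsub (mem_union_left S ha))).2

end IsSeparation

lemma exists_isSeparation_of_not_connected_comap {α : Type*} [Fintype α] [Nonempty α]
    {f : α → V} (hf : Function.Injective f) {U S : Finset V} (hS : S ⊆ U) (hU : U \ S = univ.image f)
    (h : ¬ (G.comap f).Connected) : ∃ A B, G.IsSeparation U S A B := by
  classical
  obtain ⟨x, y, hxy⟩ : ∃ x y, ¬ (G.comap f).Reachable x y := by
    by_contra! hr
    exact h ⟨fun x y => hr x y⟩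
  refine ⟨({p | (G.comap f).Reachable x p} : Finset α).image f,
    ({p | ¬ (G.comap f).Reachable x p} : Finset α).image f,
    ⟨hS, ?_, ?_, ⟨f x, mem_image_of_mem f (by simp)⟩, ⟨f y, mem_image_of_mem f (by simpa)⟩, ?_⟩⟩
  · rw [hU, ← image_union, filter_union_filter_not_eq]
  · exact disjoint_image hf |>.2 (disjoint_filter_filter_not _ _ _)
  · simp only [mem_image, mem_filter, mem_univ, true_and]
    rintro _ ⟨p, hp, rfl⟩ _ ⟨q, hq, rfl⟩ hpq
    exact hq (hp.trans (Adj.reachable (by simpa using hpq)))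

lemma exists_isSeparation_of_fragile (hG : G.Fragile) {U : Finset V} (hU : 4 ≤ #U) :
    ∃ S A B, #S ≤ 2 ∧ G.IsSeparation U S A B := by
  have hcard : Nat.card ((⊤ : G.Subgraph).induce U).verts = #U := by simp
  obtain ⟨T, hT, hdisc⟩ : ∃ T : Set ((⊤ : G.Subgraph).induce U).verts,
      T.ncard ≤ 2 ∧ ¬ (((⊤ : G.Subgraph).induce U).coe.induce Tᶜ).Connected := by
    have := hG ((⊤ : G.Subgraph).induce U)
    simp only [IsKConnected, not_and, not_forall] at this
    obtain ⟨T, hT, h⟩ := this (by omega)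
    exact ⟨T, hT, h⟩
  have : Finite ((⊤ : G.Subgraph).induce (U : Set V)).verts := U.finite_toSet
  have : Fintype ↥Tᶜ := Fintype.ofFinite _
  have : Nonempty ↥Tᶜ := by
    by_contra! hempty
    rw [Set.isEmpty_coe_sort, Set.compl_empty_iff] at hempty
    rw [hempty, Set.ncard_univ, hcard] at hT
    omega
  set S := T.toFinite.toFinset.image Subtype.val
  have hTcard : #S ≤ 2 := card_image_le.trans (by rwa [← Set.ncard_eq_toFinset_card])
  have hSU : S ⊆ U := by
    intro v hv
    obtain ⟨p, -, rfl⟩ := mem_image.1 hv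
    simpa using p.2
  have hUS : U \ S = univ.image (fun p : ↥Tᶜ => p.1.1) := by
    ext v
    simp only [S, mem_sdiff, mem_image, Set.Finite.mem_toFinset, mem_univ, true_and]
    constructor
    · rintro ⟨hv, hvT⟩
      exact ⟨⟨⟨v, hv⟩, fun h => hvT ⟨_, h, rfl⟩⟩, rfl⟩
    · rintro ⟨⟨⟨w, hw⟩, hwT⟩, rfl⟩
      exact ⟨hw, fun ⟨a, ha, haw⟩ => hwT ((Subtype.ext haw : a = ⟨w, hw⟩) ▸ ha)⟩
  have hcomap :
      ((⊤ : G.Subgraph).induce U).coe.induce Tᶜ = G.comap (fun p : ↥Tᶜ => p.1.1) := by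
    ext p q
    simp only [comap_adj, Subgraph.coe_adj, Subgraph.induce_adj, Subgraph.top_adj]
    exact ⟨fun h => h.2.2, fun h => ⟨p.1.2, q.1.2, h⟩⟩
  obtain ⟨A, B, hAB⟩ := exists_isSeparation_of_not_connected_comap
    (Subtype.val_injective.comp Subtype.val_injective) hSU hUS (hcomap ▸ hdisc)
  exact ⟨S, A, B, hTcard, hAB⟩


theorem card_edgesIn_add_four_le [Fintype G.edgeSet] [DecidableRel G.Adj] (hG : G.Fragile)
    (htf : G.CliqueFree 3) (U : Finset V) (hU : 3 ≤ #U) : #(G.edgesIn U) + 4 ≤ 2 * #U := by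
  induction U using Finset.strongInduction with
  | H U ih =>
    obtain hU3 | hU4 := hU.eq_or_lt
    · have := card_edgesIn_le_two_of_card_eq_three htf hU3.symm
      omega
    by_cases hdeg : ∃ x ∈ U, #{y ∈ U | G.Adj x y} ≤ 2
    · obtain ⟨x, hx, hdx⟩ := hdeg
      have herase := card_edgesIn_le_card_edgesIn_erase_add (G := G) U x
      have hcard := card_erase_of_mem hx
      have hrest := ih (U.erase x) (erase_ssubset hx) (by omega)
      omega
    push Not at hdeg
    obtain ⟨S, A, B, hS, hsep⟩ := exists_isSeparation_of_fragile hG hU4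
    have hside : ∀ {A B}, G.IsSeparation U S A B →
        #(G.edgesIn (A ∪ S)) + 4 ≤ 2 * #(A ∪ S) := by
      intro A B h
      obtain ⟨a, ha⟩ := h.left_nonempty
      have hdeg_a := hdeg a (h.left_subset ha)
      have hlt := h.card_filter_adj_lt ha
      exact ih _ h.left_union_ssubset (by omega)
    have hA := hside hsep
    have hB := hside hsep.symm
    have hsplit := hsep.card_edgesIn_le
    have hcard := hsep.card_add_card
    omega

end SimpleGraph

/-- Every fragile triangle-free graph on at least 3 vertices satisfies
`|E(G)| ≤ 2|V(G)| - 4`. -/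
theorem statement10 {V : Type*} [Fintype V] (G : SimpleGraph V) [DecidableRel G.Adj]
    (hG : G.Fragile) (htf : G.CliqueFree 3) (hV : 3 ≤ Fintype.card V) :
    G.edgeFinset.card ≤ 2 * Fintype.card V - 4 := by
  classical
  have := G.card_edgesIn_add_four_le hG htf univ (by rwa [card_univ])
  rw [SimpleGraph.edgesIn_univ, card_univ] at this
  omega
end

section
/- There exists a fragile finite simple graph with chromatic number exactly 4; hence the bound 4 in the statement 'every fragile graph is 4-colourable' is best possible. -/
namespace SimpleGraph

variable {V : Type*} {G : SimpleGraph V} {k : ℕ}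

theorem IsKConnected.le_ncard_neighborSet (hG : G.IsKConnected k) (v : V) :
    k ≤ (G.neighborSet v).ncard := by
  by_contra! hlt
  obtain ⟨hcard, hcut⟩ := hG
  have : Finite V := Nat.finite_of_card_ne_zero (by omega)
  set N := G.neighborSet v
  have hvN : v ∉ N := G.notMem_neighborSet_self
  obtain ⟨w, hw⟩ : (insert v N)ᶜ.Nonempty := by
    rw [Set.nonempty_compl]
    intro huniv
    have := Set.ncard_insert_le v N
    rw [huniv, Set.ncard_univ] at this
    omega
  rw [Set.mem_compl_iff, Set.mem_insert_iff, not_or] at hw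
  have : Nontrivial (Nᶜ : Set V) :=
    ⟨⟨v, hvN⟩, ⟨w, hw.2⟩, fun h => hw.1 (congrArg Subtype.val h).symm⟩
  obtain ⟨u, hu⟩ := (hcut N (by omega)).preconnected.exists_adj_of_nontrivial ⟨v, hvN⟩
  exact u.2 hu

theorem Subgraph.neighborSet_eq_of_isKConnected {H : G.Subgraph} (hH : H.coe.IsKConnected k)
    {v : V} (hv : v ∈ H.verts) [Fintype (G.neighborSet v)] (hdeg : G.degree v ≤ k) :
    H.neighborSet v = G.neighborSet v := by
  refine Set.eq_of_subset_of_ncard_le (H.neighborSet_subset v) ?_ (Set.toFinite _)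
  calc (G.neighborSet v).ncard = G.degree v := by
        rw [Set.ncard_eq_toFinset_card', Set.toFinset_card, card_neighborSet_eq_degree]
    _ ≤ k := hdeg
    _ ≤ (H.coe.neighborSet ⟨v, hv⟩).ncard := hH.le_ncard_neighborSet _
    _ = (H.neighborSet v).ncard := Set.ncard_congr' (H.coeNeighborSetEquiv _)

theorem Subgraph.reachable_of_isKConnected {H : G.Subgraph} (hH : H.coe.IsKConnected k)
    {T : Set V} (hT : T.Finite) (hTk : T.ncard ≤ k - 1) {a b : V} (ha : a ∈ H.verts)
    (hb : b ∈ H.verts) (haT : a ∉ T) (hbT : b ∉ T) :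
    (G.induce Tᶜ).Reachable ⟨a, haT⟩ ⟨b, hbT⟩ := by
  set S : Set H.verts := Subtype.val ⁻¹' T
  have hS : S.ncard ≤ k - 1 :=
    (Set.ncard_le_ncard_of_injOn Subtype.val (fun _ hx => hx) Subtype.val_injective.injOn hT).trans
      hTk
  let φ : H.coe.induce Sᶜ →g G.induce Tᶜ :=
    { toFun := fun x => ⟨x.1.1, x.2⟩
      map_rel' := fun h => H.adj_sub h }
  exact ((hH.2 S hS).preconnected ⟨⟨a, ha⟩, haT⟩ ⟨⟨b, hb⟩, hbT⟩).map φ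

theorem Reachable.mem_of_adj_closed {A : Set V} (hA : ∀ x y, G.Adj x y → x ∈ A → y ∈ A)
    {u v : V} (h : G.Reachable u v) (hu : u ∈ A) : v ∈ A := by
  obtain ⟨p⟩ := h
  induction p with
  | nil => exact hu
  | cons hxy _ ih => exact ih (hA _ _ hxy hu)

theorem Coloring.eq_of_rhombus {C : G.Coloring (Fin 3)} {a b c d : V} (hab : G.Adj a b)
    (hac : G.Adj a c) (hbc : G.Adj b c) (hdb : G.Adj d b) (hdc : G.Adj d c) : C d = C a := by
  have key : ∀ x y z w : Fin 3, x ≠ y → x ≠ z → y ≠ z → w ≠ y → w ≠ z → w = x := by omega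
  exact key _ _ _ _ (C.valid hab) (C.valid hac) (C.valid hbc) (C.valid hdb) (C.valid hdc)

end SimpleGraph

open SimpleGraph

def moserSpindleEdges : List (Fin 7 × Fin 7) :=
  [(0, 1), (0, 2), (1, 2), (1, 3), (2, 3), (0, 4), (0, 5), (4, 5), (4, 6), (5, 6), (3, 6)]

/-- The Moser spindle: the rhombi `0 1 2 3` (triangles `012`, `123`) and `0 4 5 6` (triangles
`045`, `456`) glued at `0`, with their far tips `3` and `6` joined. -/
def moserSpindle : SimpleGraph (Fin 7) where
  Adj i j := (i, j) ∈ moserSpindleEdges ∨ (j, i) ∈ moserSpindleEdges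
  symm := ⟨fun _ _ h => h.symm⟩
  loopless := ⟨by decide⟩

instance : DecidableRel moserSpindle.Adj := fun i j =>
  inferInstanceAs (Decidable ((i, j) ∈ moserSpindleEdges ∨ (j, i) ∈ moserSpindleEdges))

namespace moserSpindle

theorem degree_eq_three : ∀ v : Fin 7, v ≠ 0 → moserSpindle.degree v = 3 := by
  decide

theorem colorable_four : moserSpindle.Colorable 4 :=
  ⟨⟨![0, 1, 2, 3, 1, 2, 0], by decide⟩⟩

theorem not_colorable_three : ¬ moserSpindle.Colorable 3 := by
  rintro ⟨C⟩
  have h3 : C 3 = C 0 :=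
    C.eq_of_rhombus (b := 1) (c := 2) (by decide) (by decide) (by decide) (by decide) (by decide)
  have h6 : C 6 = C 0 :=
    C.eq_of_rhombus (b := 4) (c := 5) (by decide) (by decide) (by decide) (by decide) (by decide)
  exact C.valid (show moserSpindle.Adj 3 6 by decide) (h3.trans h6.symm)

theorem chromaticNumber_eq_four : moserSpindle.chromaticNumber = 4 :=
  chromaticNumber_eq_iff_colorable_not_colorable.mpr ⟨colorable_four, not_colorable_three⟩

theorem not_reachable_one_four :
    ¬ (moserSpindle.induce {0, 3}ᶜ).Reachable ⟨1, by decide⟩ ⟨4, by decide⟩ := by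
  intro h
  have hclosed : ∀ x y : ({0, 3}ᶜ : Set (Fin 7)), (moserSpindle.induce {0, 3}ᶜ).Adj x y →
      x.1 ∈ ({1, 2} : Set (Fin 7)) → y.1 ∈ ({1, 2} : Set (Fin 7)) := by
    rintro ⟨x, hx⟩ ⟨y, hy⟩ hxy
    revert x y
    decide
  have := h.mem_of_adj_closed (A := {x | x.1 ∈ ({1, 2} : Set (Fin 7))}) hclosed (by simp)
  simp at this

theorem fragile : moserSpindle.Fragile := by
  intro H hH
  have hclosed {v u : Fin 7} (hv0 : v ≠ 0) (hv : v ∈ H.verts) (hvu : moserSpindle.Adj v u) :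
      u ∈ H.verts := by
    have : u ∈ H.neighborSet v := by
      rw [H.neighborSet_eq_of_isKConnected hH hv (degree_eq_three v hv0).le]
      exact hvu
    exact H.edge_vert this.symm
  have hcard : 1 < H.verts.ncard := by
    have := hH.1
    rw [Nat.card_coe_set_eq] at this
    omega
  obtain ⟨v, hv, hv0⟩ := Set.exists_ne_of_one_lt_ncard hcard 0
  have h3 : 3 ∈ H.verts := by
    fin_cases v
    · exact absurd rfl hv0
    · exact hclosed (by decide) hv (by decide)
    · exact hclosed (by decide) hv (by decide)
    · exact hv
    · exact hclosed (by decide) (hclosed (u := 6) (by decide) hv (by decide)) (by decide)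
    · exact hclosed (by decide) (hclosed (u := 6) (by decide) hv (by decide)) (by decide)
    · exact hclosed (by decide) hv (by decide)
  have h1 : 1 ∈ H.verts := hclosed (by decide) h3 (by decide)
  have h6 : 6 ∈ H.verts := hclosed (by decide) h3 (by decide)
  have h4 : 4 ∈ H.verts := hclosed (by decide) h6 (by decide)
  exact not_reachable_one_four
    (H.reachable_of_isKConnected hH (Set.toFinite _) (Set.ncard_pair (by decide)).le h1 h4 _ _)

end moserSpindle

/-- There is a fragile graph with chromatic number exactly 4. -/
theorem statement16 :
    ∃ (V : Type) (_ : Fintype V) (G : SimpleGraph V),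
      G.Fragile ∧ G.chromaticNumber = 4 :=
  ⟨Fin 7, inferInstance, moserSpindle, moserSpindle.fragile, moserSpindle.chromaticNumber_eq_four⟩
end
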